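/- Suppose Y is a T₀ space. The map ι : Y → O(Z∞ × Y) sending y to the quasi-orbit O((0, y)) is injective, continuous, and open onto its image; its image is the set of quasi-orbits of points with first coordinate in ℤ, and is open and dense in O(Z∞ × Y). Moreover, the map sending the quasi-orbit O_Y(y) ∈ O(Y) (for the action n·y = σⁿ(y) on Y) to O((∞, y)) is well defined and is a homeomorphism of O(Y) onto the complement of ι(Y) in O(Z∞ × Y), and this complement is closed. -/

import Mathlib

open Filter Topology

/-- The order topology on `Z∞ = ℤ ∪ {∞}` (formally `WithTop ℤ`): every `n ∈ ℤ` is isolated,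
and the sets `J_n = {k : ℤ | n ≤ k} ∪ {∞}` form a neighborhood basis at `∞`. -/
noncomputable instance : TopologicalSpace (WithTop ℤ) := Preorder.topology (WithTop ℤ)

instance : OrderTopology (WithTop ℤ) := ⟨rfl⟩

/-- The integer power `σⁿ` (`n : ℤ`) of a homeomorphism `σ : Y ≃ₜ Y`, as a function. -/
def sigmaPow {Y : Type*} [TopologicalSpace Y] (σ : Y ≃ₜ Y) (n : ℤ) : Y → Y :=
  fun y => (σ.toEquiv ^ n) y

/-- The action of `ℤ` on `Z∞ × Y`: `n·(m, y) = (m + n, y)` for `m ∈ ℤ`, and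
`n·(∞, y) = (∞, σⁿ(y))`. -/
def actZ {Y : Type*} [TopologicalSpace Y] (σ : Y ≃ₜ Y) (n : ℤ) (p : WithTop ℤ × Y) :
    WithTop ℤ × Y :=
  (p.1.map (· + n), if p.1 = ⊤ then sigmaPow σ n p.2 else p.2)

/-- The quasi-orbit equivalence relation for an action `act` of `ℤ` on a topological space
`X`: `x ≈ y` iff the closures of the `ℤ`-orbits of `x` and `y` coincide. -/
def qSetoid {X : Type*} [TopologicalSpace X] (act : ℤ → X → X) : Setoid X :=
  ⟨fun x y =>
      closure (Set.range fun n : ℤ => act n x) = closure (Set.range fun n : ℤ => act n y),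
    ⟨fun _ => rfl, Eq.symm, Eq.trans⟩⟩

/-- The map `ι : Y → O(Z∞ × Y)` sending `y` to the quasi-orbit of `((0 : Z∞), y)`. -/
noncomputable def iotaO {Y : Type*} [TopologicalSpace Y] (σ : Y ≃ₜ Y) :
    Y → Quotient (qSetoid (actZ σ)) :=
  fun y => Quotient.mk (qSetoid (actZ σ)) (((0 : ℤ) : WithTop ℤ), y)

/-!
The closure of the orbit of `(m, y)` with `m ∈ ℤ` is `Z∞ × cl {y}`, and that of `(∞, y)` is
`{∞} × cl (σ^ℤ y)`. So, `Y` being T₀, the quasi-orbits of finite points are labelled by `y`, those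
at `∞` by the quasi-orbits of `Y`, and the two kinds never meet. Hence the preimage of `ι(U)` in
`Z∞ × Y` is `ℤ × U`, so `ι` is open and, `ℤ` being dense in `Z∞`, has dense image; and the second
projection descends to a continuous left inverse of `O_Y(y) ↦ O((∞, y))`, which is therefore an
embedding.
-/

theorem WithTop.dense_Iio_top {α : Type*} [LinearOrder α] [NoMaxOrder α] [Nonempty α]
    [TopologicalSpace (WithTop α)] [OrderTopology (WithTop α)] :
    Dense (Set.Iio (⊤ : WithTop α)) := by
  intro x
  induction x using WithTop.recTopCoe with
  | top =>
    refine (mem_closure_iff_nhds_basis nhds_top_basis).2 fun a ha => ?_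
    lift a to α using ha.ne
    obtain ⟨b, hab⟩ := exists_gt a
    exact ⟨b, WithTop.coe_lt_top b, WithTop.coe_lt_coe.2 hab⟩
  | coe a => exact subset_closure (WithTop.coe_lt_top a)

section QuasiOrbits

variable {Y : Type*} [TopologicalSpace Y] (σ : Y ≃ₜ Y)

@[simp]
theorem actZ_coe (n m : ℤ) (y : Y) : actZ σ n ((m : WithTop ℤ), y) = (↑(m + n), y) := by
  simp [actZ, WithTop.map_coe]

@[simp]
theorem actZ_top (n : ℤ) (y : Y) : actZ σ n (⊤, y) = (⊤, sigmaPow σ n y) := by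
  simp [actZ]

theorem closure_range_actZ_coe (m : ℤ) (y : Y) :
    closure (Set.range fun n => actZ σ n ((m : WithTop ℤ), y)) = Set.univ ×ˢ closure {y} := by
  have horbit : (Set.range fun n => actZ σ n ((m : WithTop ℤ), y)) =
      Set.range ((↑) : ℤ → WithTop ℤ) ×ˢ {y} := by
    ext ⟨a, b⟩
    simp only [actZ_coe, Set.mem_range, Prod.mk.injEq, Set.mem_prod, Set.mem_singleton_iff]
    constructor
    · rintro ⟨n, rfl, rfl⟩
      exact ⟨⟨m + n, rfl⟩, rfl⟩
    · rintro ⟨⟨k, rfl⟩, rfl⟩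
      exact ⟨k - m, by rw [add_sub_cancel], rfl⟩
  have hdense : closure (Set.range ((↑) : ℤ → WithTop ℤ)) = Set.univ :=
    (WithTop.dense_Iio_top.mono fun a ha => WithTop.ne_top_iff_exists.1 ha.ne).closure_eq
  rw [horbit, closure_prod_eq, hdense]

theorem closure_range_actZ_top (y : Y) :
    closure (Set.range fun n => actZ σ n (⊤, y)) =
      {⊤} ×ˢ closure (Set.range fun n => sigmaPow σ n y) := by
  have horbit : (Set.range fun n => actZ σ n (⊤, y)) =
      {⊤} ×ˢ Set.range fun n => sigmaPow σ n y := by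
    ext ⟨a, b⟩
    simp only [actZ_top, Set.mem_range, Prod.mk.injEq, Set.mem_prod, Set.mem_singleton_iff]
    constructor
    · rintro ⟨n, rfl, rfl⟩
      exact ⟨rfl, n, rfl⟩
    · rintro ⟨rfl, n, rfl⟩
      exact ⟨n, rfl, rfl⟩
  rw [horbit, closure_prod_eq, closure_singleton]

theorem mk_coe_eq_mk_coe_iff [T0Space Y] {m m' : ℤ} {y y' : Y} :
    Quotient.mk (qSetoid (actZ σ)) ((m : WithTop ℤ), y) = Quotient.mk _ ((m' : WithTop ℤ), y') ↔
      y = y' := by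
  rw [Quotient.eq, ← inseparable_iff_eq, inseparable_iff_closure_eq]
  change closure _ = closure _ ↔ _
  rw [closure_range_actZ_coe, closure_range_actZ_coe,
    Set.prod_eq_prod_iff_of_nonempty (Set.univ_nonempty.prod (Set.singleton_nonempty y).closure),
    and_iff_right rfl]

theorem mk_coe_eq_iotaO (m : ℤ) (y : Y) :
    Quotient.mk (qSetoid (actZ σ)) ((m : WithTop ℤ), y) = iotaO σ y := by
  apply Quotient.sound
  change closure _ = closure _
  rw [closure_range_actZ_coe, closure_range_actZ_coe]

theorem mk_coe_ne_mk_top {m : ℤ} {y y' : Y} :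
    Quotient.mk (qSetoid (actZ σ)) ((m : WithTop ℤ), y) ≠ Quotient.mk _ (⊤, y') := by
  intro h
  have hmem : ((m : WithTop ℤ), y) ∈ closure (Set.range fun n => actZ σ n (⊤, y')) := by
    rw [← (Quotient.eq.1 h : closure _ = closure _), closure_range_actZ_coe]
    exact ⟨trivial, subset_closure rfl⟩
  rw [closure_range_actZ_top] at hmem
  exact WithTop.coe_ne_top hmem.1

theorem mk_top_eq_mk_top_iff {y y' : Y} :
    Quotient.mk (qSetoid (actZ σ)) (⊤, y) = Quotient.mk _ (⊤, y') ↔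
      Quotient.mk (qSetoid (sigmaPow σ)) y = Quotient.mk _ y' := by
  rw [Quotient.eq, Quotient.eq]
  change closure _ = closure _ ↔ closure _ = closure _
  rw [closure_range_actZ_top, closure_range_actZ_top,
    Set.prod_eq_prod_iff_of_nonempty
      ((Set.singleton_nonempty _).prod (Set.range_nonempty _).closure), and_iff_right rfl]

theorem mk_snd_eq_of_mk_eq [T0Space Y] {p q : WithTop ℤ × Y}
    (h : Quotient.mk (qSetoid (actZ σ)) p = Quotient.mk _ q) :
    Quotient.mk (qSetoid (sigmaPow σ)) p.2 = Quotient.mk _ q.2 := by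
  obtain ⟨a, y⟩ := p
  obtain ⟨b, y'⟩ := q
  induction a using WithTop.recTopCoe <;> induction b using WithTop.recTopCoe
  · exact (mk_top_eq_mk_top_iff σ).1 h
  · exact absurd h.symm (mk_coe_ne_mk_top σ)
  · exact absurd h (mk_coe_ne_mk_top σ)
  · rw [(mk_coe_eq_mk_coe_iff σ).1 h]

theorem iotaO_injective [T0Space Y] : Function.Injective (iotaO σ) :=
  fun _ _ h => (mk_coe_eq_mk_coe_iff σ).1 h

theorem continuous_iotaO : Continuous (iotaO σ) :=
  continuous_quotient_mk'.comp (Continuous.prodMk_right _)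

theorem range_iotaO :
    Set.range (iotaO σ) = {q | ∃ (m : ℤ) (y : Y), q = Quotient.mk _ ((m : WithTop ℤ), y)} := by
  ext q
  refine ⟨fun ⟨y, hy⟩ => ⟨0, y, hy.symm⟩, fun ⟨m, y, hq⟩ => ⟨y, ?_⟩⟩
  rw [hq, mk_coe_eq_iotaO]

theorem preimage_image_iotaO [T0Space Y] (U : Set Y) :
    Quotient.mk (qSetoid (actZ σ)) ⁻¹' (iotaO σ '' U) = Set.Iio ⊤ ×ˢ U := by
  ext ⟨a, y⟩
  simp only [Set.mem_preimage, Set.mem_image, iotaO, Set.mem_prod, Set.mem_Iio]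
  induction a using WithTop.recTopCoe
  · simp only [lt_self_iff_false, false_and, iff_false]
    exact fun ⟨_, _, h⟩ => mk_coe_ne_mk_top σ h
  · simp only [mk_coe_eq_mk_coe_iff, WithTop.coe_lt_top, true_and, exists_eq_right]

theorem isOpenMap_iotaO [T0Space Y] : IsOpenMap (iotaO σ) := fun U hU => by
  change IsOpen (Quotient.mk (qSetoid (actZ σ)) ⁻¹' _)
  rw [preimage_image_iotaO]
  exact isOpen_Iio.prod hU

theorem dense_range_iotaO [T0Space Y] : Dense (Set.range (iotaO σ)) := by
  rw [← Set.image_univ, ← Set.image_preimage_eq (iotaO σ '' _) Quotient.mk_surjective,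
    preimage_image_iotaO]
  exact Quotient.mk_surjective.denseRange.dense_image continuous_quotient_mk'
    (WithTop.dense_Iio_top.prod dense_univ)

noncomputable def quasiOrbitAtTop :
    Quotient (qSetoid (sigmaPow σ)) → Quotient (qSetoid (actZ σ)) :=
  Quotient.lift (fun y => Quotient.mk _ (⊤, y))
    fun _ _ h => (mk_top_eq_mk_top_iff σ).2 (Quotient.sound h)

noncomputable def quasiOrbitSnd [T0Space Y] :
    Quotient (qSetoid (actZ σ)) → Quotient (qSetoid (sigmaPow σ)) :=
  Quotient.lift (fun p => Quotient.mk _ p.2) fun _ _ h => mk_snd_eq_of_mk_eq σ (Quotient.sound h)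

theorem isEmbedding_quasiOrbitAtTop [T0Space Y] : IsEmbedding (quasiOrbitAtTop σ) := by
  refine Function.LeftInverse.isEmbedding (f := quasiOrbitSnd σ) (fun q => ?_) ?_ ?_
  · induction q using Quotient.ind
    rfl
  · exact continuous_quot_lift _ (continuous_quotient_mk'.comp continuous_snd)
  · exact continuous_quot_lift _ (continuous_quotient_mk'.comp (Continuous.prodMk_right _))

theorem range_quasiOrbitAtTop : Set.range (quasiOrbitAtTop σ) = (Set.range (iotaO σ))ᶜ := by
  ext q
  induction q using Quotient.ind with | _ p
  obtain ⟨a, y⟩ := p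
  induction a using WithTop.recTopCoe
  · refine ⟨fun _ ⟨y', h⟩ => mk_coe_ne_mk_top σ h, fun _ => ⟨Quotient.mk _ y, rfl⟩⟩
  · refine ⟨?_, fun h => absurd ⟨y, (mk_coe_eq_iotaO σ _ y).symm⟩ h⟩
    rintro ⟨q, hq⟩
    induction q using Quotient.ind
    exact absurd hq.symm (mk_coe_ne_mk_top σ)

end QuasiOrbits

/-- For a T₀ space `Y`: `ι : Y → O(Z∞ × Y)`, `y ↦ O((0, y))`, is injective, continuous, and
open onto its image; its image is the set of quasi-orbits of points with first coordinate in
`ℤ` and is open and dense. Moreover `O_Y(y) ↦ O((∞, y))` is well defined and is a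
homeomorphism of `O(Y)` onto the complement of `ι(Y)`, which is closed. -/
theorem quasiOrbitSpace_actZ {Y : Type*} [TopologicalSpace Y] [T0Space Y] (σ : Y ≃ₜ Y) :
    Function.Injective (iotaO σ) ∧
    Continuous (iotaO σ) ∧
    IsOpenMap (iotaO σ) ∧
    Set.range (iotaO σ) =
      {q : Quotient (qSetoid (actZ σ)) | ∃ (m : ℤ) (y : Y),
        q = Quotient.mk (qSetoid (actZ σ)) ((m : WithTop ℤ), y)} ∧
    IsOpen (Set.range (iotaO σ)) ∧
    Dense (Set.range (iotaO σ)) ∧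
    ∃ j : Quotient (qSetoid (fun (n : ℤ) (y : Y) => sigmaPow σ n y)) →
        Quotient (qSetoid (actZ σ)),
      (∀ y : Y,
        j (Quotient.mk (qSetoid (fun (n : ℤ) (y : Y) => sigmaPow σ n y)) y) =
          Quotient.mk (qSetoid (actZ σ)) ((⊤ : WithTop ℤ), y)) ∧
      Topology.IsEmbedding j ∧
      Set.range j = (Set.range (iotaO σ))ᶜ ∧
      IsClosed ((Set.range (iotaO σ))ᶜ) := by
  have hopen : IsOpen (Set.range (iotaO σ)) := (isOpenMap_iotaO σ).isOpen_range
  exact ⟨iotaO_injective σ, continuous_iotaO σ, isOpenMap_iotaO σ, range_iotaO σ, hopen,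
    dense_range_iotaO σ, quasiOrbitAtTop σ, fun _ => rfl, isEmbedding_quasiOrbitAtTop σ,
    range_quasiOrbitAtTop σ, hopen.isClosed_compl⟩
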